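/- Let (Γ, N) and (Γ', N') be equivalent link-regular numbered graphs, with geodesic automata 𝒟 (over alphabet S, transition δ) and 𝒟' (over alphabet S', transition δ'), and let P and Q be multisets of pairs of integers. If Σ is a P-state of 𝒟 and Σ' is a P-state of 𝒟', then the number of letters s ∈ S such that δ(Σ, s) is a Q-state equals the number of letters s' ∈ S' such that δ'(Σ', s') is a Q-state. -/
import Mathlib


variable {V V' : Type*}

/-- The link of a finite set of vertices `σ`: vertices `v ∉ σ` with `σ ∪ {v}` a clique. -/
noncomputable def lk [Fintype V] (G : SimpleGraph V) (σ : Finset V) : Finset V :=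
  Set.Finite.toFinset (Set.toFinite {v : V | v ∉ σ ∧ G.IsClique (insert v (σ : Set V))})

/-- `N(U)`: the multiset of vertex numbers of a finite set of vertices. -/
def NM (N : V → ℕ) (U : Finset V) : Multiset ℕ := U.val.map N

/-- Link-regularity of a numbered graph. -/
def LinkRegular [Fintype V] (G : SimpleGraph V) (N : V → ℕ) : Prop :=
  ∀ σ₁ σ₂ : Finset V, G.IsClique (σ₁ : Set V) → G.IsClique (σ₂ : Set V) →
    NM N σ₁ = NM N σ₂ → NM N (lk G σ₁) = NM N (lk G σ₂)

/-- Equivalence of link-regular numbered graphs. -/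
def EquivLinkRegular [Fintype V] [Fintype V'] (G : SimpleGraph V) (N : V → ℕ)
    (G' : SimpleGraph V') (N' : V' → ℕ) : Prop :=
  NM N Finset.univ = NM N' Finset.univ ∧
  ∀ (σ : Finset V) (σ' : Finset V'), G.IsClique (σ : Set V) → G'.IsClique (σ' : Set V') →
    NM N σ = NM N' σ' → NM N (lk G σ) = NM N' (lk G' σ')

/-- A powered clique of a numbered graph, as a function `V → ℤ`. -/
def IsPoweredClique (G : SimpleGraph V) (N : V → ℕ) (f : V → ℤ) : Prop :=
  G.IsClique {v | f v ≠ 0} ∧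
  ∀ v, (N v = 2 → 0 ≤ f v ∧ f v ≤ 1) ∧
       (N v ≠ 2 → -((N v / 2 : ℕ) : ℤ) ≤ f v ∧ f v ≤ ((N v / 2 : ℕ) : ℤ))

/-- The transition function of the geodesic automaton: `none` is the reject state.
The letter `(v, true)` is `v`, and `(v, false)` is `v⁻¹`. -/
def step (G : SimpleGraph V) [DecidableRel G.Adj] [DecidableEq V] (N : V → ℕ)
    (f : V → ℤ) (l : V × Bool) : Option (V → ℤ) :=
  if l.2 then
    if 0 ≤ f l.1 ∧ f l.1 < ((N l.1 / 2 : ℕ) : ℤ) then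
      some fun u => if u = l.1 then f l.1 + 1 else if G.Adj l.1 u then f u else 0
    else none
  else
    if N l.1 ≠ 2 ∧ -((N l.1 / 2 : ℕ) : ℤ) < f l.1 ∧ f l.1 ≤ 0 then
      some fun u => if u = l.1 then f l.1 - 1 else if G.Adj l.1 u then f u else 0
    else none

/-- The power profile of a powered clique. -/
noncomputable def profile [Fintype V] (N : V → ℕ) (f : V → ℤ) : Multiset (ℤ × ℕ) :=
  (Set.Finite.toFinset (Set.toFinite {v : V | f v ≠ 0})).val.map fun v => (f v, N v)

namespace Stmt7
set_option linter.unusedSectionVars false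
set_option linter.unusedVariables false

/-! ### Generic multiset lemmas -/

/-- powerset commutes with map -/
theorem powerset_map {α γ : Type*} (F : α → γ) (s : Multiset α) :
    (s.map F).powerset = s.powerset.map (Multiset.map F) := by
  induction s using Multiset.induction with
  | empty => simp
  | cons a s ih =>
      simp only [Multiset.map_cons, Multiset.powerset_cons, ih, Multiset.map_add,
        Multiset.map_map]
      congr 1
      apply Multiset.map_congr rfl
      intro t _
      simp

theorem card_filter_powerset {α γ : Type*} [DecidableEq γ] (s : Finset α)
    (F : α → γ) (R : Multiset γ) [DecidablePred fun ρ : Finset α => ρ.val.map F = R] :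
    ((s.powerset).filter (fun ρ => ρ.val.map F = R)).card = ((s.val.map F).powerset).count R := by
  classical
  have hval : s.powerset.val.map Finset.val = s.val.powerset := by
    simp [Finset.powerset, Multiset.map_pmap, Multiset.pmap_eq_map]
  rw [powerset_map, ← hval, Multiset.map_map, Multiset.count_map]
  rw [Finset.card_def, Finset.filter_val]
  congr 1
  apply Multiset.filter_congr
  intro ρ _
  exact eq_comm

/-! ### Basic definitions -/

/-- The support of `f` as a finset. -/
noncomputable def supp [Fintype V] (f : V → ℤ) : Finset V :=
  Set.Finite.toFinset (Set.toFinite {v : V | f v ≠ 0})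

@[simp] theorem mem_supp [Fintype V] {f : V → ℤ} {v : V} : v ∈ supp f ↔ f v ≠ 0 := by
  simp [supp]

@[simp] theorem coe_supp [Fintype V] (f : V → ℤ) : (supp f : Set V) = {v | f v ≠ 0} := by
  simp [supp]

/-- the multiset of pairs `(f v, N v)` over a finset -/
def NMf (N : V → ℕ) (f : V → ℤ) (U : Finset V) : Multiset (ℤ × ℕ) :=
  U.val.map fun v => (f v, N v)

theorem profile_eq [Fintype V] (N : V → ℕ) (f : V → ℤ) :
    profile N f = NMf N f (supp f) := rfl

theorem NM_eq_map_NMf (N : V → ℕ) (f : V → ℤ) (U : Finset V) :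
    NM N U = (NMf N f U).map Prod.snd := by
  simp [NM, NMf, Multiset.map_map, Function.comp]

/-- `τ_v`: the part of the support adjacent to `v`. -/
noncomputable def tau [Fintype V] [DecidableEq V] (G : SimpleGraph V) [DecidableRel G.Adj]
    (f : V → ℤ) (v : V) : Finset V :=
  supp f ∩ G.neighborFinset v

theorem mem_tau [Fintype V] [DecidableEq V] {G : SimpleGraph V} [DecidableRel G.Adj]
    {f : V → ℤ} {v u : V} : u ∈ tau G f v ↔ f u ≠ 0 ∧ G.Adj v u := by
  simp [tau]

theorem tau_subset [Fintype V] [DecidableEq V] (G : SimpleGraph V) [DecidableRel G.Adj]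
    (f : V → ℤ) (v : V) : tau G f v ⊆ supp f :=
  Finset.inter_subset_left

section Single

variable [Fintype V] [DecidableEq V] {G : SimpleGraph V} [DecidableRel G.Adj]
  {N : V → ℕ} {f : V → ℤ}

omit [DecidableEq V] [DecidableRel G.Adj] in
theorem supp_clique (hf : IsPoweredClique G N f) : G.IsClique (supp f : Set V) := by
  rw [coe_supp]; exact hf.1

omit [DecidableEq V] [DecidableRel G.Adj] in
theorem subset_clique (hf : IsPoweredClique G N f) {ρ : Finset V} (hρ : ρ ⊆ supp f) :
    G.IsClique (ρ : Set V) :=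
  (supp_clique hf).subset (by exact_mod_cast hρ)

/-- profile of the function obtained in a transition -/
theorem profile_gfun (G : SimpleGraph V) [DecidableRel G.Adj] (N : V → ℕ) (f : V → ℤ)
    (v : V) (c : ℤ) (hc : c ≠ 0) :
    profile N (fun u => if u = v then c else if G.Adj v u then f u else 0)
      = (c, N v) ::ₘ NMf N f (tau G f v) := by
  classical
  set g : V → ℤ := fun u => if u = v then c else if G.Adj v u then f u else 0 with hg
  have hvτ : v ∉ tau G f v := by
    simp [mem_tau]
  have hsupp : (Set.Finite.toFinset (Set.toFinite {u : V | g u ≠ 0}))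
      = insert v (tau G f v) := by
    ext u
    simp only [Set.Finite.mem_toFinset, Set.mem_setOf_eq, Finset.mem_insert, mem_tau, hg]
    by_cases h : u = v
    · subst h; simp [hc]
    · simp only [if_neg h]
      by_cases ha : G.Adj v u
      · simp [ha, h]
      · simp [ha, h]
  show (Set.Finite.toFinset (Set.toFinite {u : V | g u ≠ 0})).val.map
      (fun u => (g u, N u)) = _
  rw [hsupp, Finset.insert_val_of_notMem hvτ, Multiset.map_cons]
  have hv : g v = c := by simp [hg]
  rw [hv]
  congr 1
  apply Multiset.map_congr rfl
  intro u hu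
  have hu' : u ∈ tau G f v := hu
  have h1 : u ≠ v := by
    rintro rfl; exact hvτ hu'
  have h2 : G.Adj v u := (mem_tau.1 hu').2
  simp [hg, h1, h2]

/-- the function obtained in a transition is a powered clique -/
theorem isPC_gfun (hf : IsPoweredClique G N f) (v : V) (c : ℤ)
    (hcl : N v = 2 → 0 ≤ c ∧ c ≤ 1)
    (hcu : N v ≠ 2 → -((N v / 2 : ℕ) : ℤ) ≤ c ∧ c ≤ ((N v / 2 : ℕ) : ℤ)) :
    IsPoweredClique G N (fun u => if u = v then c else if G.Adj v u then f u else 0) := by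
  classical
  set g : V → ℤ := fun u => if u = v then c else if G.Adj v u then f u else 0 with hg
  constructor
  · intro a ha b hb hab
    simp only [Set.mem_setOf_eq, hg] at ha hb
    by_cases hav : a = v
    · have hbv : ¬ b = v := fun h => hab (by rw [hav, h])
      rw [if_neg hbv] at hb
      by_cases hadj : G.Adj v b
      · rw [hav]; exact hadj
      · simp [hadj] at hb
    · rw [if_neg hav] at ha
      by_cases hbv : b = v
      · have hadj : G.Adj v a := by
          by_contra h; simp [h] at ha
        rw [hbv]; exact hadj.symm
      · rw [if_neg hbv] at hb
        have hadj : G.Adj v a := by by_contra h; simp [h] at ha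
        have hadj' : G.Adj v b := by by_contra h; simp [h] at hb
        rw [if_pos hadj] at ha
        rw [if_pos hadj'] at hb
        exact hf.1 ha hb hab
  · intro u
    by_cases huv : u = v
    · subst huv
      constructor
      · intro h2
        have := hcl h2
        simpa [hg] using this
      · intro h2
        have := hcu h2
        simpa [hg] using this
    · have hb := hf.2 u
      constructor
      · intro h2
        have hb' := hb.1 h2
        by_cases hadj : G.Adj v u
        · simpa [hg, huv, hadj] using hb'
        · simp [hg, huv, hadj]
      · intro h2
        have hb' := hb.2 h2
        have hnn : (0:ℤ) ≤ ((N u / 2 : ℕ) : ℤ) := Int.natCast_nonneg _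
        by_cases hadj : G.Adj v u
        · simpa [hg, huv, hadj] using hb'
        · simp only [hg, if_neg huv, if_neg hadj]
          omega

/-- characterization of the letters counted in the statement -/
theorem mem_char (hN : ∀ v, 2 ≤ N v) (hf : IsPoweredClique G N f) (Q : Multiset (ℤ × ℕ))
    (v : V) (b : Bool) :
    ((b = false → N v ≠ 2) ∧
      ∃ g, step G N f (v, b) = some g ∧ IsPoweredClique G N g ∧ profile N g = Q) ↔
    (if b then 0 ≤ f v ∧ f v < ((N v / 2 : ℕ) : ℤ) ∧ (f v + 1, N v) ::ₘ NMf N f (tau G f v) = Q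
     else N v ≠ 2 ∧ -((N v / 2 : ℕ) : ℤ) < f v ∧ f v ≤ 0 ∧
       (f v - 1, N v) ::ₘ NMf N f (tau G f v) = Q) := by
  classical
  have hnn : (0:ℤ) ≤ ((N v / 2 : ℕ) : ℤ) := Int.natCast_nonneg _
  cases b with
  | true =>
      simp only [if_true, Bool.true_eq_false, false_implies, true_and, step]
      constructor
      · rintro ⟨g, hstep, -, hprof⟩
        by_cases hcond : 0 ≤ f v ∧ f v < ((N v / 2 : ℕ) : ℤ)
        · rw [if_pos hcond] at hstep
          have hgg := (Option.some_injective _ hstep).symm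
          subst hgg
          have hc : f v + 1 ≠ 0 := by omega
          rw [profile_gfun G N f v _ hc] at hprof
          exact ⟨hcond.1, hcond.2, hprof⟩
        · rw [if_neg hcond] at hstep
          simp at hstep
      · rintro ⟨h0, h1, hQ⟩
        have hcond : 0 ≤ f v ∧ f v < ((N v / 2 : ℕ) : ℤ) := ⟨h0, h1⟩
        have hc : f v + 1 ≠ 0 := by omega
        refine ⟨_, by rw [if_pos hcond], ?_, ?_⟩
        · apply isPC_gfun hf
          · intro h2
            have : ((N v / 2 : ℕ) : ℤ) = 1 := by rw [h2]; norm_num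
            omega
          · intro _
            omega
        · rw [profile_gfun G N f v _ hc]
          exact hQ
  | false =>
      simp only [step, Bool.false_eq_true, if_false]
      constructor
      · rintro ⟨h2, g, hstep, -, hprof⟩
        by_cases hcond : N v ≠ 2 ∧ -((N v / 2 : ℕ) : ℤ) < f v ∧ f v ≤ 0
        · rw [if_pos hcond] at hstep
          have hgg := (Option.some_injective _ hstep).symm
          subst hgg
          have hc : f v - 1 ≠ 0 := by omega
          rw [profile_gfun G N f v _ hc] at hprof
          exact ⟨hcond.1, hcond.2.1, hcond.2.2, hprof⟩
        · rw [if_neg hcond] at hstep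
          simp at hstep
      · rintro ⟨h2, h3, h4, hQ⟩
        have hcond : N v ≠ 2 ∧ -((N v / 2 : ℕ) : ℤ) < f v ∧ f v ≤ 0 := ⟨h2, h3, h4⟩
        have hc : f v - 1 ≠ 0 := by omega
        refine ⟨fun _ => h2, _, by rw [if_pos hcond], ?_, ?_⟩
        · apply isPC_gfun hf
          · intro h5; exact absurd h5 h2
          · intro _
            omega
        · rw [profile_gfun G N f v _ hc]
          exact hQ

theorem tau_of_mem (hf : IsPoweredClique G N f) {v : V} (hv : v ∈ supp f) :
    tau G f v = (supp f).erase v := by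
  ext u
  rw [mem_tau, Finset.mem_erase, mem_supp]
  constructor
  · rintro ⟨h1, h2⟩
    exact ⟨h2.ne', h1⟩
  · rintro ⟨h1, h2⟩
    refine ⟨h2, hf.1 ?_ ?_ (Ne.symm h1)⟩
    · exact mem_supp.1 hv
    · exact h2

omit [DecidableRel G.Adj] in
theorem NMf_erase (N : V → ℕ) (f : V → ℤ) {v : V} (hv : v ∈ supp f) :
    NMf N f ((supp f).erase v) = (NMf N f (supp f)).erase (f v, N v) := by
  have hcons : (supp f).val = v ::ₘ ((supp f).erase v).val := by
    rw [Finset.erase_val, Multiset.cons_erase (Finset.mem_val.mpr hv)]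
  have h1 : (f v, N v) ::ₘ NMf N f ((supp f).erase v) = NMf N f (supp f) := by
    show _ = (supp f).val.map _
    rw [hcons, Multiset.map_cons]
    rfl
  rw [← h1, Multiset.erase_cons_head]

omit [DecidableRel G.Adj] [Fintype V] in
theorem countP_NM (N : V → ℕ) (p : ℕ → Prop) [DecidablePred p] (s : Finset V) :
    Multiset.countP p (NM N s) = (s.filter (fun v => p (N v))).card := by
  show Multiset.countP p (s.val.map N) = _
  rw [Multiset.countP_map, Finset.card_def, Finset.filter_val]

omit [DecidableRel G.Adj] [Fintype V] in
theorem NMf_sdiff_add (N : V → ℕ) (f : V → ℤ) {s t : Finset V} (h : s ⊆ t) :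
    NMf N f s + NMf N f (t \ s) = NMf N f t := by
  show s.val.map _ + (t \ s).val.map _ = t.val.map _
  rw [Finset.sdiff_val, ← Multiset.map_add]
  congr 1
  rw [add_tsub_cancel_of_le (Finset.val_le_iff.mpr h)]

omit [DecidableRel G.Adj] [Fintype V] in
theorem NM_sdiff_add (N : V → ℕ) {s t : Finset V} (h : s ⊆ t) :
    NM N s + NM N (t \ s) = NM N t := by
  show s.val.map _ + (t \ s).val.map _ = t.val.map _
  rw [Finset.sdiff_val, ← Multiset.map_add]
  congr 1
  rw [add_tsub_cancel_of_le (Finset.val_le_iff.mpr h)]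

/-- decomposition of the link of a sub-clique of the support -/
theorem cnt_eq (hf : IsPoweredClique G N f) (p : ℕ → Prop) [DecidablePred p]
    (ρ : Finset V) (hρ : ρ ⊆ supp f) :
    Multiset.countP p (NM N (lk G ρ))
      = (Finset.univ.filter (fun v => v ∉ supp f ∧ p (N v) ∧ ρ ⊆ tau G f v)).card
        + Multiset.countP p (NM N (supp f \ ρ)) := by
  classical
  rw [countP_NM N p (lk G ρ), countP_NM N p (supp f \ ρ)]
  have hE : (lk G ρ).filter (fun v => p (N v))
      = (Finset.univ.filter (fun v => v ∉ supp f ∧ p (N v) ∧ ρ ⊆ tau G f v))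
        ∪ ((supp f \ ρ).filter (fun v => p (N v))) := by
    ext v
    simp only [Finset.mem_filter, Finset.mem_union, Finset.mem_univ, true_and,
      Finset.mem_sdiff, lk, Set.Finite.mem_toFinset, Set.mem_setOf_eq]
    constructor
    · rintro ⟨⟨hvρ, hcl⟩, hp⟩
      by_cases hvσ : v ∈ supp f
      · right; exact ⟨⟨hvσ, hvρ⟩, hp⟩
      · left
        refine ⟨hvσ, hp, ?_⟩
        intro u hu
        rw [mem_tau]
        have huv : v ≠ u := by rintro rfl; exact hvρ hu
        refine ⟨mem_supp.1 (hρ hu), hcl (Set.mem_insert _ _)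
          (Set.mem_insert_of_mem _ (by exact_mod_cast hu)) huv⟩
    · rintro (⟨hvσ, hp, hτ⟩ | ⟨⟨hvσ, hvρ⟩, hp⟩)
      · have hvρ : v ∉ ρ := fun h => hvσ (hρ h)
        refine ⟨⟨hvρ, ?_⟩, hp⟩
        rw [SimpleGraph.isClique_insert]
        refine ⟨subset_clique hf hρ, ?_⟩
        intro u hu hne
        have := hτ (by exact_mod_cast hu)
        exact (mem_tau.1 this).2
      · refine ⟨⟨hvρ, ?_⟩, hp⟩
        rw [SimpleGraph.isClique_insert]
        refine ⟨subset_clique hf hρ, ?_⟩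
        intro u hu hne
        apply hf.1 (mem_supp.1 hvσ) (mem_supp.1 (hρ (by exact_mod_cast hu))) hne
  rw [hE, Finset.card_union_of_disjoint]
  rw [Finset.disjoint_left]
  intro v hv hv2
  have h1 := (Finset.mem_filter.1 hv).2.1
  have h2 := (Finset.mem_sdiff.1 (Finset.mem_filter.1 hv2).1).1
  exact h1 h2

omit [DecidableRel G.Adj] [Fintype V] in
theorem countP_NMf (N : V → ℕ) (f : V → ℤ) (pr : ℤ × ℕ → Prop) [DecidablePred pr]
    (s : Finset V) :
    Multiset.countP pr (NMf N f s) = (s.filter (fun v => pr (f v, N v))).card := by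
  show Multiset.countP pr (s.val.map _) = _
  rw [Multiset.countP_map, Finset.card_def, Finset.filter_val]

theorem NMf_tau_le (G : SimpleGraph V) [DecidableRel G.Adj] (N : V → ℕ) (f : V → ℤ) (v : V) :
    NMf N f (tau G f v) ≤ NMf N f (supp f) :=
  Multiset.map_le_map (Finset.val_le_iff.mpr (tau_subset G f v))

/-- decomposition of the powerset-count sum according to the fibers of `NMf ∘ tau` -/
theorem W_decomp (p : ℕ → Prop) [DecidablePred p] (S : Multiset (ℤ × ℕ)) :
    ∑ v ∈ Finset.univ.filter (fun v => v ∉ supp f ∧ p (N v)),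
        ((NMf N f (tau G f v)).powerset.count S)
      = ∑ S' ∈ (NMf N f (supp f)).powerset.toFinset,
          (S'.powerset.count S) *
            (Finset.univ.filter
              (fun v => v ∉ supp f ∧ p (N v) ∧ NMf N f (tau G f v) = S')).card := by
  classical
  have hmap : ∀ v ∈ Finset.univ.filter (fun v => v ∉ supp f ∧ p (N v)),
      NMf N f (tau G f v) ∈ (NMf N f (supp f)).powerset.toFinset := by
    intro v _
    rw [Multiset.mem_toFinset, Multiset.mem_powerset]
    exact NMf_tau_le G N f v
  rw [← Finset.sum_fiberwise_of_maps_to hmap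
    (fun v => (NMf N f (tau G f v)).powerset.count S)]
  apply Finset.sum_congr rfl
  intro S' _
  have h1 : ∀ v ∈ (Finset.univ.filter (fun v => v ∉ supp f ∧ p (N v))).filter
      (fun v => NMf N f (tau G f v) = S'),
      (NMf N f (tau G f v)).powerset.count S = S'.powerset.count S := by
    intro v hv
    rw [(Finset.mem_filter.1 hv).2]
  rw [Finset.sum_congr rfl h1, Finset.sum_const, smul_eq_mul, mul_comm]
  congr 2
  rw [Finset.filter_filter]
  apply Finset.filter_congr
  intro v _
  simp only [Finset.mem_univ, and_assoc]

end Single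

section Cross

variable [Fintype V] [Fintype V'] [DecidableEq V] [DecidableEq V']
  {G : SimpleGraph V} {G' : SimpleGraph V'} [DecidableRel G.Adj] [DecidableRel G'.Adj]
  {N : V → ℕ} {N' : V' → ℕ} {f : V → ℤ} {f' : V' → ℤ}

/-- the basic cross-graph count equality, for sub-cliques with equal `NMf` -/
theorem cnt_cross (hf : IsPoweredClique G N f) (hf' : IsPoweredClique G' N' f')
    (p : ℕ → Prop) [DecidablePred p]
    (ρ : Finset V) (ρ' : Finset V') (hρ : ρ ⊆ supp f) (hρ' : ρ' ⊆ supp f')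
    (hR : NMf N f ρ = NMf N' f' ρ') (hP : NMf N f (supp f) = NMf N' f' (supp f'))
    (hlk : NM N (lk G ρ) = NM N' (lk G' ρ')) :
    (Finset.univ.filter (fun v => v ∉ supp f ∧ p (N v) ∧ ρ ⊆ tau G f v)).card
      = (Finset.univ.filter (fun v => v ∉ supp f' ∧ p (N' v) ∧ ρ' ⊆ tau G' f' v)).card := by
  have h1 := cnt_eq hf p ρ hρ
  have h1' := cnt_eq hf' p ρ' hρ'
  have hNρ : NM N ρ = NM N' ρ' := by
    rw [NM_eq_map_NMf N f, NM_eq_map_NMf N' f', hR]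
  have hNσ : NM N (supp f) = NM N' (supp f') := by
    rw [NM_eq_map_NMf N f, NM_eq_map_NMf N' f', hP]
  have hsd : NM N (supp f \ ρ) = NM N' (supp f' \ ρ') := by
    have e1 : NM N ρ + NM N (supp f \ ρ) = NM N (supp f) := NM_sdiff_add N hρ
    have e1' : NM N' ρ' + NM N' (supp f' \ ρ') = NM N' (supp f') := NM_sdiff_add N' hρ'
    have : NM N ρ + NM N (supp f \ ρ) = NM N ρ + NM N' (supp f' \ ρ') := by
      rw [e1, hNσ, ← e1', hNρ]
    exact add_left_cancel this
  rw [hlk, hsd] at h1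
  omega

variable (hLR : LinkRegular G N) (hLR' : LinkRegular G' N')
  (hEq : EquivLinkRegular G N G' N')
  (hf : IsPoweredClique G N f) (hf' : IsPoweredClique G' N' f')
  (hP : NMf N f (supp f) = NMf N' f' (supp f'))

include hLR hLR' hEq hf hf' hP

theorem W_cross (p : ℕ → Prop) [DecidablePred p] (R : Multiset (ℤ × ℕ)) :
    ∑ v ∈ Finset.univ.filter (fun v => v ∉ supp f ∧ p (N v)),
        ((NMf N f (tau G f v)).powerset.count R)
      = ∑ v ∈ Finset.univ.filter (fun v => v ∉ supp f' ∧ p (N' v)),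
        ((NMf N' f' (tau G' f' v)).powerset.count R) := by
  classical
  -- rewrite each summand as a sum over the fiber of subsets of the support
  have key : ∀ v : V, (NMf N f (tau G f v)).powerset.count R
      = ∑ ρ ∈ (supp f).powerset.filter (fun ρ => NMf N f ρ = R),
          (if ρ ⊆ tau G f v then 1 else 0) := by
    intro v
    have hb : ((tau G f v).powerset.filter (fun ρ => ρ.val.map (fun u => (f u, N u)) = R)).card
        = (((tau G f v).val.map (fun u => (f u, N u))).powerset).count R :=
      card_filter_powerset (tau G f v) (fun u => (f u, N u)) R
    have hb' : ((tau G f v).powerset.filter (fun ρ => NMf N f ρ = R)).card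
        = (NMf N f (tau G f v)).powerset.count R := hb
    rw [← hb', ← Finset.card_filter, Finset.filter_filter]
    congr 1
    ext ρ
    simp only [Finset.mem_filter, Finset.mem_powerset]
    constructor
    · rintro ⟨h1, h2⟩; exact ⟨h1.trans (tau_subset G f v), h2, h1⟩
    · rintro ⟨h1, h2, h3⟩; exact ⟨h3, h2⟩
  have key' : ∀ v : V', (NMf N' f' (tau G' f' v)).powerset.count R
      = ∑ ρ ∈ (supp f').powerset.filter (fun ρ => NMf N' f' ρ = R),
          (if ρ ⊆ tau G' f' v then 1 else 0) := by
    intro v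
    have hb : ((tau G' f' v).powerset.filter (fun ρ => ρ.val.map (fun u => (f' u, N' u)) = R)).card
        = (((tau G' f' v).val.map (fun u => (f' u, N' u))).powerset).count R :=
      card_filter_powerset (tau G' f' v) (fun u => (f' u, N' u)) R
    have hb' : ((tau G' f' v).powerset.filter (fun ρ => NMf N' f' ρ = R)).card
        = (NMf N' f' (tau G' f' v)).powerset.count R := hb
    rw [← hb', ← Finset.card_filter, Finset.filter_filter]
    congr 1
    ext ρ
    simp only [Finset.mem_filter, Finset.mem_powerset]
    constructor
    · rintro ⟨h1, h2⟩; exact ⟨h1.trans (tau_subset G' f' v), h2, h1⟩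
    · rintro ⟨h1, h2, h3⟩; exact ⟨h3, h2⟩
  rw [Finset.sum_congr rfl (fun v _ => key v), Finset.sum_congr rfl (fun v _ => key' v)]
  rw [Finset.sum_comm, Finset.sum_comm (s := Finset.univ.filter (fun v => v ∉ supp f' ∧ p (N' v)))]
  -- now both sides are sums over the fibers
  have hA : ∀ ρ : Finset V, ∑ v ∈ Finset.univ.filter (fun v => v ∉ supp f ∧ p (N v)),
      (if ρ ⊆ tau G f v then 1 else 0)
      = (Finset.univ.filter (fun v => v ∉ supp f ∧ p (N v) ∧ ρ ⊆ tau G f v)).card := by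
    intro ρ
    rw [← Finset.card_filter, Finset.filter_filter]
    congr 1
    apply Finset.filter_congr
    intro v _
    simp only [and_assoc]
  have hA' : ∀ ρ' : Finset V', ∑ v ∈ Finset.univ.filter (fun v => v ∉ supp f' ∧ p (N' v)),
      (if ρ' ⊆ tau G' f' v then 1 else 0)
      = (Finset.univ.filter (fun v => v ∉ supp f' ∧ p (N' v) ∧ ρ' ⊆ tau G' f' v)).card := by
    intro ρ'
    rw [← Finset.card_filter, Finset.filter_filter]
    congr 1
    apply Finset.filter_congr
    intro v _
    simp only [and_assoc]
  rw [Finset.sum_congr rfl (fun ρ _ => hA ρ), Finset.sum_congr rfl (fun ρ _ => hA' ρ)]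
  -- the two index sets have the same cardinality
  set fib := (supp f).powerset.filter (fun ρ => NMf N f ρ = R) with hfib
  set fib' := (supp f').powerset.filter (fun ρ => NMf N' f' ρ = R) with hfib'
  have hcard : fib.card = fib'.card := by
    have hb : fib.card = ((NMf N f (supp f)).powerset).count R :=
      card_filter_powerset (supp f) (fun u => (f u, N u)) R
    have hb' : fib'.card = ((NMf N' f' (supp f')).powerset).count R :=
      card_filter_powerset (supp f') (fun u => (f' u, N' u)) R
    rw [hb, hb', hP]
  rcases fib.eq_empty_or_nonempty with hemp | ⟨ρ₀, hρ₀⟩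
  · have hemp' : fib' = ∅ := by
      rw [← Finset.card_eq_zero, ← hcard, hemp, Finset.card_empty]
    rw [hemp, hemp', Finset.sum_empty, Finset.sum_empty]
  · have hne' : fib'.Nonempty := by
      rw [← Finset.card_pos, ← hcard, Finset.card_pos]
      exact ⟨ρ₀, hρ₀⟩
    obtain ⟨ρ₀', hρ₀'⟩ := hne'
    have hρ₀σ : ρ₀ ⊆ supp f := Finset.mem_powerset.1 (Finset.mem_filter.1 hρ₀).1
    have hρ₀R : NMf N f ρ₀ = R := (Finset.mem_filter.1 hρ₀).2
    have hρ₀'σ : ρ₀' ⊆ supp f' := Finset.mem_powerset.1 (Finset.mem_filter.1 hρ₀').1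
    have hρ₀'R : NMf N' f' ρ₀' = R := (Finset.mem_filter.1 hρ₀').2
    have hconst : ∀ ρ ∈ fib,
        (Finset.univ.filter (fun v => v ∉ supp f ∧ p (N v) ∧ ρ ⊆ tau G f v)).card
        = (Finset.univ.filter (fun v => v ∉ supp f ∧ p (N v) ∧ ρ₀ ⊆ tau G f v)).card := by
      intro ρ hρ
      have hρσ : ρ ⊆ supp f := Finset.mem_powerset.1 (Finset.mem_filter.1 hρ).1
      have hρR : NMf N f ρ = R := (Finset.mem_filter.1 hρ).2
      refine cnt_cross hf hf p ρ ρ₀ hρσ hρ₀σ (hρR.trans hρ₀R.symm) rfl ?_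
      apply hLR ρ ρ₀ (subset_clique hf hρσ) (subset_clique hf hρ₀σ)
      rw [NM_eq_map_NMf N f, NM_eq_map_NMf N f, hρR, hρ₀R]
    have hconst' : ∀ ρ ∈ fib',
        (Finset.univ.filter (fun v => v ∉ supp f' ∧ p (N' v) ∧ ρ ⊆ tau G' f' v)).card
        = (Finset.univ.filter (fun v => v ∉ supp f' ∧ p (N' v) ∧ ρ₀' ⊆ tau G' f' v)).card := by
      intro ρ hρ
      have hρσ : ρ ⊆ supp f' := Finset.mem_powerset.1 (Finset.mem_filter.1 hρ).1
      have hρR : NMf N' f' ρ = R := (Finset.mem_filter.1 hρ).2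
      refine cnt_cross hf' hf' p ρ ρ₀' hρσ hρ₀'σ (hρR.trans hρ₀'R.symm) rfl ?_
      apply hLR' ρ ρ₀' (subset_clique hf' hρσ) (subset_clique hf' hρ₀'σ)
      rw [NM_eq_map_NMf N' f', NM_eq_map_NMf N' f', hρR, hρ₀'R]
    rw [Finset.sum_congr rfl hconst, Finset.sum_congr rfl hconst',
      Finset.sum_const, Finset.sum_const, smul_eq_mul, smul_eq_mul, hcard]
    congr 1
    refine cnt_cross hf hf' p ρ₀ ρ₀' hρ₀σ hρ₀'σ (hρ₀R.trans hρ₀'R.symm) hP ?_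
    apply hEq.2 ρ₀ ρ₀' (subset_clique hf hρ₀σ) (subset_clique hf' hρ₀'σ)
    rw [NM_eq_map_NMf N f, NM_eq_map_NMf N' f', hρ₀R, hρ₀'R]

theorem H_cross (p : ℕ → Prop) [DecidablePred p] :
    ∀ (n : ℕ) (S : Multiset (ℤ × ℕ)), S ≤ NMf N f (supp f) →
      (NMf N f (supp f)).card - S.card ≤ n →
    (Finset.univ.filter (fun v => v ∉ supp f ∧ p (N v) ∧ NMf N f (tau G f v) = S)).card
      = (Finset.univ.filter
          (fun v => v ∉ supp f' ∧ p (N' v) ∧ NMf N' f' (tau G' f' v) = S)).card := by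
  classical
  intro n
  induction n using Nat.strong_induction_on with
  | _ n IH =>
    intro S hSP hn
    have hW := W_cross hLR hLR' hEq hf hf' hP p S
    rw [W_decomp (G := G) p S, W_decomp (G := G') p S, ← hP] at hW
    have hSmem : S ∈ (NMf N f (supp f)).powerset.toFinset := by
      rw [Multiset.mem_toFinset, Multiset.mem_powerset]; exact hSP
    rw [← Finset.add_sum_erase _ _ hSmem, ← Finset.add_sum_erase _ _ hSmem] at hW
    have hrest : ∀ S' ∈ ((NMf N f (supp f)).powerset.toFinset).erase S,
        (S'.powerset.count S) *
          (Finset.univ.filter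
            (fun v => v ∉ supp f ∧ p (N v) ∧ NMf N f (tau G f v) = S')).card
        = (S'.powerset.count S) *
          (Finset.univ.filter
            (fun v => v ∉ supp f' ∧ p (N' v) ∧ NMf N' f' (tau G' f' v) = S')).card := by
      intro S' hS'
      rcases Nat.eq_zero_or_pos (S'.powerset.count S) with h0 | hpos
      · rw [h0, zero_mul, zero_mul]
      · have hle : S ≤ S' := Multiset.mem_powerset.1 (Multiset.count_pos.1 hpos)
        have hne : S' ≠ S := (Finset.mem_erase.1 hS').1
        have hlt : S < S' := lt_of_le_of_ne hle (Ne.symm hne)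
        have hcardlt : Multiset.card S < Multiset.card S' := Multiset.card_lt_card hlt
        have hS'P : S' ≤ NMf N f (supp f) := by
          have := (Finset.mem_erase.1 hS').2
          rw [Multiset.mem_toFinset, Multiset.mem_powerset] at this
          exact this
        have hS'card : Multiset.card S' ≤ Multiset.card (NMf N f (supp f)) :=
          Multiset.card_le_card hS'P
        rw [IH (Multiset.card (NMf N f (supp f)) - Multiset.card S') (by omega) S' hS'P le_rfl]
    rw [Finset.sum_congr rfl hrest] at hW
    have hc := Nat.add_right_cancel hW
    have hcpos : 0 < S.powerset.count S :=
      Multiset.count_pos.2 (Multiset.mem_powerset.2 le_rfl)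
    exact Nat.eq_of_mul_eq_mul_left hcpos hc

theorem out_cross (T : ℕ → Multiset (ℤ × ℕ) → Prop) [∀ n S, Decidable (T n S)] :
    (Finset.univ.filter (fun v => v ∉ supp f ∧ T (N v) (NMf N f (tau G f v)))).card
      = (Finset.univ.filter (fun v => v ∉ supp f' ∧ T (N' v) (NMf N' f' (tau G' f' v)))).card := by
  classical
  have hmap : ∀ v ∈ Finset.univ.filter (fun v => v ∉ supp f ∧ T (N v) (NMf N f (tau G f v))),
      NMf N f (tau G f v) ∈ (NMf N f (supp f)).powerset.toFinset := by
    intro v _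
    rw [Multiset.mem_toFinset, Multiset.mem_powerset]
    exact NMf_tau_le G N f v
  have hmap' : ∀ v ∈ Finset.univ.filter
      (fun v => v ∉ supp f' ∧ T (N' v) (NMf N' f' (tau G' f' v))),
      NMf N' f' (tau G' f' v) ∈ (NMf N f (supp f)).powerset.toFinset := by
    intro v _
    rw [Multiset.mem_toFinset, Multiset.mem_powerset, hP]
    exact NMf_tau_le G' N' f' v
  rw [Finset.card_eq_sum_card_fiberwise hmap, Finset.card_eq_sum_card_fiberwise hmap']
  apply Finset.sum_congr rfl
  intro S hS
  have hSP : S ≤ NMf N f (supp f) := by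
    rw [← Multiset.mem_powerset, ← Multiset.mem_toFinset]
    exact hS
  have e1 : (Finset.univ.filter
        (fun v => v ∉ supp f ∧ T (N v) (NMf N f (tau G f v)))).filter
      (fun v => NMf N f (tau G f v) = S)
      = Finset.univ.filter (fun v => v ∉ supp f ∧ T (N v) S ∧ NMf N f (tau G f v) = S) := by
    rw [Finset.filter_filter]
    apply Finset.filter_congr
    intro v _
    constructor
    · rintro ⟨⟨h1, h2⟩, h3⟩; rw [h3] at h2; exact ⟨h1, h2, h3⟩
    · rintro ⟨h1, h2, h3⟩; rw [← h3] at h2; exact ⟨⟨h1, h2⟩, h3⟩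
  have e1' : (Finset.univ.filter
        (fun v => v ∉ supp f' ∧ T (N' v) (NMf N' f' (tau G' f' v)))).filter
      (fun v => NMf N' f' (tau G' f' v) = S)
      = Finset.univ.filter
          (fun v => v ∉ supp f' ∧ T (N' v) S ∧ NMf N' f' (tau G' f' v) = S) := by
    rw [Finset.filter_filter]
    apply Finset.filter_congr
    intro v _
    constructor
    · rintro ⟨⟨h1, h2⟩, h3⟩; rw [h3] at h2; exact ⟨h1, h2, h3⟩
    · rintro ⟨h1, h2, h3⟩; rw [← h3] at h2; exact ⟨⟨h1, h2⟩, h3⟩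
  rw [e1, e1']
  exact H_cross hLR hLR' hEq hf hf' hP (fun n => T n S)
    (Multiset.card (NMf N f (supp f)) - Multiset.card S) S hSP le_rfl

end Cross

end Stmt7

theorem stmt7 [Fintype V] [Fintype V'] [DecidableEq V] [DecidableEq V']
    (G : SimpleGraph V) (G' : SimpleGraph V')
    [DecidableRel G.Adj] [DecidableRel G'.Adj]
    (N : V → ℕ) (N' : V' → ℕ) (hN : ∀ v, 2 ≤ N v) (hN' : ∀ v, 2 ≤ N' v)
    (hLR : LinkRegular G N) (hLR' : LinkRegular G' N')
    (hEq : EquivLinkRegular G N G' N')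
    (P Q : Multiset (ℤ × ℕ))
    (f : V → ℤ) (f' : V' → ℤ)
    (hf : IsPoweredClique G N f) (hf' : IsPoweredClique G' N' f')
    (hfP : profile N f = P) (hf'P : profile N' f' = P) :
    Set.ncard {l : V × Bool | (l.2 = false → N l.1 ≠ 2) ∧
        ∃ g, step G N f l = some g ∧ IsPoweredClique G N g ∧ profile N g = Q} =
    Set.ncard {l : V' × Bool | (l.2 = false → N' l.1 ≠ 2) ∧
        ∃ g, step G' N' f' l = some g ∧ IsPoweredClique G' N' g ∧ profile N' g = Q} := by
  classical
  open Stmt7 in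
  -- the common profile, as `NMf` of the supports
  have hσP : NMf N f (supp f) = P := by rw [← profile_eq]; exact hfP
  have hσ'P : NMf N' f' (supp f') = P := by rw [← profile_eq]; exact hf'P
  have hP0 : NMf N f (supp f) = NMf N' f' (supp f') := by rw [hσP, hσ'P]
  -- convert the set cardinalities to finset cardinalities
  have c1 : Set.ncard {l : V × Bool | (l.2 = false → N l.1 ≠ 2) ∧
        ∃ g, step G N f l = some g ∧ IsPoweredClique G N g ∧ profile N g = Q}
      = (Finset.univ.filter (fun l : V × Bool => (l.2 = false → N l.1 ≠ 2) ∧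
        ∃ g, step G N f l = some g ∧ IsPoweredClique G N g ∧ profile N g = Q)).card := by
    rw [← Set.ncard_coe_finset]
    congr 1
    ext l
    simp
  have c1' : Set.ncard {l : V' × Bool | (l.2 = false → N' l.1 ≠ 2) ∧
        ∃ g, step G' N' f' l = some g ∧ IsPoweredClique G' N' g ∧ profile N' g = Q}
      = (Finset.univ.filter (fun l : V' × Bool => (l.2 = false → N' l.1 ≠ 2) ∧
        ∃ g, step G' N' f' l = some g ∧ IsPoweredClique G' N' g ∧ profile N' g = Q)).card := by
    rw [← Set.ncard_coe_finset]
    congr 1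
    ext l
    simp
  rw [c1, c1']

  -- ### side unprimed ###
  have split : (Finset.univ.filter (fun l : V × Bool => (l.2 = false → N l.1 ≠ 2) ∧
        ∃ g, step G N f l = some g ∧ IsPoweredClique G N g ∧ profile N g = Q)).card
      = (Finset.univ.filter (fun v : V => ((true : Bool) = false → N v ≠ 2) ∧
          ∃ g, step G N f (v, true) = some g ∧ IsPoweredClique G N g ∧ profile N g = Q)).card
        + (Finset.univ.filter (fun v : V => ((false : Bool) = false → N v ≠ 2) ∧
          ∃ g, step G N f (v, false) = some g ∧ IsPoweredClique G N g ∧ profile N g = Q)).card := by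
    rw [Finset.card_filter, Finset.card_filter, Finset.card_filter,
      Fintype.sum_prod_type, ← Finset.sum_add_distrib]
    apply Finset.sum_congr rfl
    intro v _
    rw [Fintype.sum_bool]
  have echarT : (Finset.univ.filter (fun v : V => ((true : Bool) = false → N v ≠ 2) ∧
          ∃ g, step G N f (v, true) = some g ∧ IsPoweredClique G N g ∧ profile N g = Q)).card
      = (Finset.univ.filter (fun v : V => 0 ≤ f v ∧ f v < ((N v / 2 : ℕ) : ℤ) ∧
          (f v + 1, N v) ::ₘ NMf N f (tau G f v) = Q)).card := by
    congr 1
    apply Finset.filter_congr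
    intro v _
    exact (mem_char hN hf Q v true).trans (iff_of_eq (if_pos rfl))
  have echarF : (Finset.univ.filter (fun v : V => ((false : Bool) = false → N v ≠ 2) ∧
          ∃ g, step G N f (v, false) = some g ∧ IsPoweredClique G N g ∧ profile N g = Q)).card
      = (Finset.univ.filter (fun v : V => N v ≠ 2 ∧ -((N v / 2 : ℕ) : ℤ) < f v ∧ f v ≤ 0 ∧
          (f v - 1, N v) ::ₘ NMf N f (tau G f v) = Q)).card := by
    congr 1
    apply Finset.filter_congr
    intro v _
    exact (mem_char hN hf Q v false).trans (iff_of_eq (if_neg (by simp)))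
  have splitT : (Finset.univ.filter (fun v : V => 0 ≤ f v ∧ f v < ((N v / 2 : ℕ) : ℤ) ∧
          (f v + 1, N v) ::ₘ NMf N f (tau G f v) = Q)).card
      = (Finset.univ.filter (fun v : V => v ∈ supp f ∧ 0 ≤ f v ∧ f v < ((N v / 2 : ℕ) : ℤ) ∧
          (f v + 1, N v) ::ₘ NMf N f (tau G f v) = Q)).card
        + (Finset.univ.filter (fun v : V => v ∉ supp f ∧ 0 ≤ f v ∧ f v < ((N v / 2 : ℕ) : ℤ) ∧
          (f v + 1, N v) ::ₘ NMf N f (tau G f v) = Q)).card := by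
    rw [← Finset.card_filter_add_card_filter_not (p := fun v => v ∈ supp f),
      Finset.filter_filter, Finset.filter_filter]
    congr 1 <;> · congr 1; apply Finset.filter_congr; intro v _; tauto
  have splitF : (Finset.univ.filter (fun v : V => N v ≠ 2 ∧ -((N v / 2 : ℕ) : ℤ) < f v ∧ f v ≤ 0 ∧
          (f v - 1, N v) ::ₘ NMf N f (tau G f v) = Q)).card
      = (Finset.univ.filter (fun v : V => v ∈ supp f ∧ N v ≠ 2 ∧ -((N v / 2 : ℕ) : ℤ) < f v ∧ f v ≤ 0 ∧
          (f v - 1, N v) ::ₘ NMf N f (tau G f v) = Q)).card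
        + (Finset.univ.filter (fun v : V => v ∉ supp f ∧ N v ≠ 2 ∧ -((N v / 2 : ℕ) : ℤ) < f v ∧ f v ≤ 0 ∧
          (f v - 1, N v) ::ₘ NMf N f (tau G f v) = Q)).card := by
    rw [← Finset.card_filter_add_card_filter_not (p := fun v => v ∈ supp f),
      Finset.filter_filter, Finset.filter_filter]
    congr 1 <;> · congr 1; apply Finset.filter_congr; intro v _; tauto
  have inT : (Finset.univ.filter (fun v : V => v ∈ supp f ∧ 0 ≤ f v ∧ f v < ((N v / 2 : ℕ) : ℤ) ∧
          (f v + 1, N v) ::ₘ NMf N f (tau G f v) = Q)).card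
      = Multiset.countP (fun q : ℤ × ℕ => 0 ≤ q.1 ∧ q.1 < ((q.2 / 2 : ℕ) : ℤ) ∧
          (q.1 + 1, q.2) ::ₘ P.erase q = Q) (NMf N f (supp f)) := by
    have e : Finset.univ.filter (fun v : V => v ∈ supp f ∧ 0 ≤ f v ∧ f v < ((N v / 2 : ℕ) : ℤ) ∧
          (f v + 1, N v) ::ₘ NMf N f (tau G f v) = Q)
        = (supp f).filter (fun v => 0 ≤ f v ∧ f v < ((N v / 2 : ℕ) : ℤ) ∧
          (f v + 1, N v) ::ₘ P.erase (f v, N v) = Q) := by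
      ext v
      simp only [Finset.mem_filter, Finset.mem_univ, true_and]
      constructor
      · rintro ⟨hv, h1, h2, h3⟩
        refine ⟨hv, h1, h2, ?_⟩
        rw [← h3]
        congr 1
        rw [tau_of_mem hf hv, NMf_erase N f hv, hσP]
      · rintro ⟨hv, h1, h2, h3⟩
        refine ⟨hv, h1, h2, ?_⟩
        rw [← h3]
        congr 1
        rw [tau_of_mem hf hv, NMf_erase N f hv, hσP]
    rw [e]
    exact (countP_NMf N f (fun q : ℤ × ℕ => 0 ≤ q.1 ∧ q.1 < ((q.2 / 2 : ℕ) : ℤ) ∧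
          (q.1 + 1, q.2) ::ₘ P.erase q = Q) (supp f)).symm
  have inF : (Finset.univ.filter (fun v : V => v ∈ supp f ∧ N v ≠ 2 ∧ -((N v / 2 : ℕ) : ℤ) < f v ∧ f v ≤ 0 ∧
          (f v - 1, N v) ::ₘ NMf N f (tau G f v) = Q)).card
      = Multiset.countP (fun q : ℤ × ℕ => q.2 ≠ 2 ∧ -((q.2 / 2 : ℕ) : ℤ) < q.1 ∧ q.1 ≤ 0 ∧
          (q.1 - 1, q.2) ::ₘ P.erase q = Q) (NMf N f (supp f)) := by
    have e : Finset.univ.filter (fun v : V => v ∈ supp f ∧ N v ≠ 2 ∧ -((N v / 2 : ℕ) : ℤ) < f v ∧ f v ≤ 0 ∧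
          (f v - 1, N v) ::ₘ NMf N f (tau G f v) = Q)
        = (supp f).filter (fun v => N v ≠ 2 ∧ -((N v / 2 : ℕ) : ℤ) < f v ∧ f v ≤ 0 ∧
          (f v - 1, N v) ::ₘ P.erase (f v, N v) = Q) := by
      ext v
      simp only [Finset.mem_filter, Finset.mem_univ, true_and]
      constructor
      · rintro ⟨hv, h1, h2, h3, h4⟩
        refine ⟨hv, h1, h2, h3, ?_⟩
        rw [← h4]
        congr 1
        rw [tau_of_mem hf hv, NMf_erase N f hv, hσP]
      · rintro ⟨hv, h1, h2, h3, h4⟩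
        refine ⟨hv, h1, h2, h3, ?_⟩
        rw [← h4]
        congr 1
        rw [tau_of_mem hf hv, NMf_erase N f hv, hσP]
    rw [e]
    exact (countP_NMf N f (fun q : ℤ × ℕ => q.2 ≠ 2 ∧ -((q.2 / 2 : ℕ) : ℤ) < q.1 ∧ q.1 ≤ 0 ∧
          (q.1 - 1, q.2) ::ₘ P.erase q = Q) (supp f)).symm
  have outT : (Finset.univ.filter (fun v : V => v ∉ supp f ∧ 0 ≤ f v ∧ f v < ((N v / 2 : ℕ) : ℤ) ∧
          (f v + 1, N v) ::ₘ NMf N f (tau G f v) = Q)).card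
      = (Finset.univ.filter (fun v : V => v ∉ supp f ∧ ((0:ℤ) < ((N v / 2 : ℕ) : ℤ) ∧
          ((1:ℤ), N v) ::ₘ NMf N f (tau G f v) = Q))).card := by
    congr 1
    apply Finset.filter_congr
    intro v _
    constructor
    · rintro ⟨hv, h1, h2, h3⟩
      have hv0 : f v = 0 := by
        by_contra h0
        exact hv (mem_supp.2 h0)
      rw [hv0] at h2
      rw [hv0, zero_add] at h3
      exact ⟨hv, h2, h3⟩
    · rintro ⟨hv, h2, h3⟩
      have hv0 : f v = 0 := by
        by_contra h0
        exact hv (mem_supp.2 h0)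
      rw [hv0, zero_add]
      exact ⟨hv, le_rfl, h2, h3⟩
  have outF : (Finset.univ.filter (fun v : V => v ∉ supp f ∧ N v ≠ 2 ∧ -((N v / 2 : ℕ) : ℤ) < f v ∧ f v ≤ 0 ∧
          (f v - 1, N v) ::ₘ NMf N f (tau G f v) = Q)).card
      = (Finset.univ.filter (fun v : V => v ∉ supp f ∧ (N v ≠ 2 ∧ -((N v / 2 : ℕ) : ℤ) < (0:ℤ) ∧
          ((-1:ℤ), N v) ::ₘ NMf N f (tau G f v) = Q))).card := by
    congr 1
    apply Finset.filter_congr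
    intro v _
    constructor
    · rintro ⟨hv, h1, h2, h3, h4⟩
      have hv0 : f v = 0 := by
        by_contra h0
        exact hv (mem_supp.2 h0)
      rw [hv0] at h2
      rw [hv0, zero_sub] at h4
      exact ⟨hv, h1, h2, h4⟩
    · rintro ⟨hv, h1, h2, h4⟩
      have hv0 : f v = 0 := by
        by_contra h0
        exact hv (mem_supp.2 h0)
      rw [hv0, zero_sub]
      exact ⟨hv, h1, h2, le_rfl, h4⟩

  -- ### side ' ###
  have split' : (Finset.univ.filter (fun l : V' × Bool => (l.2 = false → N' l.1 ≠ 2) ∧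
        ∃ g, step G' N' f' l = some g ∧ IsPoweredClique G' N' g ∧ profile N' g = Q)).card
      = (Finset.univ.filter (fun v : V' => ((true : Bool) = false → N' v ≠ 2) ∧
          ∃ g, step G' N' f' (v, true) = some g ∧ IsPoweredClique G' N' g ∧ profile N' g = Q)).card
        + (Finset.univ.filter (fun v : V' => ((false : Bool) = false → N' v ≠ 2) ∧
          ∃ g, step G' N' f' (v, false) = some g ∧ IsPoweredClique G' N' g ∧ profile N' g = Q)).card := by
    rw [Finset.card_filter, Finset.card_filter, Finset.card_filter,
      Fintype.sum_prod_type, ← Finset.sum_add_distrib]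
    apply Finset.sum_congr rfl
    intro v _
    rw [Fintype.sum_bool]
  have echarT' : (Finset.univ.filter (fun v : V' => ((true : Bool) = false → N' v ≠ 2) ∧
          ∃ g, step G' N' f' (v, true) = some g ∧ IsPoweredClique G' N' g ∧ profile N' g = Q)).card
      = (Finset.univ.filter (fun v : V' => 0 ≤ f' v ∧ f' v < ((N' v / 2 : ℕ) : ℤ) ∧
          (f' v + 1, N' v) ::ₘ NMf N' f' (tau G' f' v) = Q)).card := by
    congr 1
    apply Finset.filter_congr
    intro v _
    exact (mem_char hN' hf' Q v true).trans (iff_of_eq (if_pos rfl))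
  have echarF' : (Finset.univ.filter (fun v : V' => ((false : Bool) = false → N' v ≠ 2) ∧
          ∃ g, step G' N' f' (v, false) = some g ∧ IsPoweredClique G' N' g ∧ profile N' g = Q)).card
      = (Finset.univ.filter (fun v : V' => N' v ≠ 2 ∧ -((N' v / 2 : ℕ) : ℤ) < f' v ∧ f' v ≤ 0 ∧
          (f' v - 1, N' v) ::ₘ NMf N' f' (tau G' f' v) = Q)).card := by
    congr 1
    apply Finset.filter_congr
    intro v _
    exact (mem_char hN' hf' Q v false).trans (iff_of_eq (if_neg (by simp)))
  have splitT' : (Finset.univ.filter (fun v : V' => 0 ≤ f' v ∧ f' v < ((N' v / 2 : ℕ) : ℤ) ∧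
          (f' v + 1, N' v) ::ₘ NMf N' f' (tau G' f' v) = Q)).card
      = (Finset.univ.filter (fun v : V' => v ∈ supp f' ∧ 0 ≤ f' v ∧ f' v < ((N' v / 2 : ℕ) : ℤ) ∧
          (f' v + 1, N' v) ::ₘ NMf N' f' (tau G' f' v) = Q)).card
        + (Finset.univ.filter (fun v : V' => v ∉ supp f' ∧ 0 ≤ f' v ∧ f' v < ((N' v / 2 : ℕ) : ℤ) ∧
          (f' v + 1, N' v) ::ₘ NMf N' f' (tau G' f' v) = Q)).card := by
    rw [← Finset.card_filter_add_card_filter_not (p := fun v => v ∈ supp f'),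
      Finset.filter_filter, Finset.filter_filter]
    congr 1 <;> · congr 1; apply Finset.filter_congr; intro v _; tauto
  have splitF' : (Finset.univ.filter (fun v : V' => N' v ≠ 2 ∧ -((N' v / 2 : ℕ) : ℤ) < f' v ∧ f' v ≤ 0 ∧
          (f' v - 1, N' v) ::ₘ NMf N' f' (tau G' f' v) = Q)).card
      = (Finset.univ.filter (fun v : V' => v ∈ supp f' ∧ N' v ≠ 2 ∧ -((N' v / 2 : ℕ) : ℤ) < f' v ∧ f' v ≤ 0 ∧
          (f' v - 1, N' v) ::ₘ NMf N' f' (tau G' f' v) = Q)).card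
        + (Finset.univ.filter (fun v : V' => v ∉ supp f' ∧ N' v ≠ 2 ∧ -((N' v / 2 : ℕ) : ℤ) < f' v ∧ f' v ≤ 0 ∧
          (f' v - 1, N' v) ::ₘ NMf N' f' (tau G' f' v) = Q)).card := by
    rw [← Finset.card_filter_add_card_filter_not (p := fun v => v ∈ supp f'),
      Finset.filter_filter, Finset.filter_filter]
    congr 1 <;> · congr 1; apply Finset.filter_congr; intro v _; tauto
  have inT' : (Finset.univ.filter (fun v : V' => v ∈ supp f' ∧ 0 ≤ f' v ∧ f' v < ((N' v / 2 : ℕ) : ℤ) ∧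
          (f' v + 1, N' v) ::ₘ NMf N' f' (tau G' f' v) = Q)).card
      = Multiset.countP (fun q : ℤ × ℕ => 0 ≤ q.1 ∧ q.1 < ((q.2 / 2 : ℕ) : ℤ) ∧
          (q.1 + 1, q.2) ::ₘ P.erase q = Q) (NMf N' f' (supp f')) := by
    have e : Finset.univ.filter (fun v : V' => v ∈ supp f' ∧ 0 ≤ f' v ∧ f' v < ((N' v / 2 : ℕ) : ℤ) ∧
          (f' v + 1, N' v) ::ₘ NMf N' f' (tau G' f' v) = Q)
        = (supp f').filter (fun v => 0 ≤ f' v ∧ f' v < ((N' v / 2 : ℕ) : ℤ) ∧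
          (f' v + 1, N' v) ::ₘ P.erase (f' v, N' v) = Q) := by
      ext v
      simp only [Finset.mem_filter, Finset.mem_univ, true_and]
      constructor
      · rintro ⟨hv, h1, h2, h3⟩
        refine ⟨hv, h1, h2, ?_⟩
        rw [← h3]
        congr 1
        rw [tau_of_mem hf' hv, NMf_erase N' f' hv, hσ'P]
      · rintro ⟨hv, h1, h2, h3⟩
        refine ⟨hv, h1, h2, ?_⟩
        rw [← h3]
        congr 1
        rw [tau_of_mem hf' hv, NMf_erase N' f' hv, hσ'P]
    rw [e]
    exact (countP_NMf N' f' (fun q : ℤ × ℕ => 0 ≤ q.1 ∧ q.1 < ((q.2 / 2 : ℕ) : ℤ) ∧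
          (q.1 + 1, q.2) ::ₘ P.erase q = Q) (supp f')).symm
  have inF' : (Finset.univ.filter (fun v : V' => v ∈ supp f' ∧ N' v ≠ 2 ∧ -((N' v / 2 : ℕ) : ℤ) < f' v ∧ f' v ≤ 0 ∧
          (f' v - 1, N' v) ::ₘ NMf N' f' (tau G' f' v) = Q)).card
      = Multiset.countP (fun q : ℤ × ℕ => q.2 ≠ 2 ∧ -((q.2 / 2 : ℕ) : ℤ) < q.1 ∧ q.1 ≤ 0 ∧
          (q.1 - 1, q.2) ::ₘ P.erase q = Q) (NMf N' f' (supp f')) := by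
    have e : Finset.univ.filter (fun v : V' => v ∈ supp f' ∧ N' v ≠ 2 ∧ -((N' v / 2 : ℕ) : ℤ) < f' v ∧ f' v ≤ 0 ∧
          (f' v - 1, N' v) ::ₘ NMf N' f' (tau G' f' v) = Q)
        = (supp f').filter (fun v => N' v ≠ 2 ∧ -((N' v / 2 : ℕ) : ℤ) < f' v ∧ f' v ≤ 0 ∧
          (f' v - 1, N' v) ::ₘ P.erase (f' v, N' v) = Q) := by
      ext v
      simp only [Finset.mem_filter, Finset.mem_univ, true_and]
      constructor
      · rintro ⟨hv, h1, h2, h3, h4⟩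
        refine ⟨hv, h1, h2, h3, ?_⟩
        rw [← h4]
        congr 1
        rw [tau_of_mem hf' hv, NMf_erase N' f' hv, hσ'P]
      · rintro ⟨hv, h1, h2, h3, h4⟩
        refine ⟨hv, h1, h2, h3, ?_⟩
        rw [← h4]
        congr 1
        rw [tau_of_mem hf' hv, NMf_erase N' f' hv, hσ'P]
    rw [e]
    exact (countP_NMf N' f' (fun q : ℤ × ℕ => q.2 ≠ 2 ∧ -((q.2 / 2 : ℕ) : ℤ) < q.1 ∧ q.1 ≤ 0 ∧
          (q.1 - 1, q.2) ::ₘ P.erase q = Q) (supp f')).symm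
  have outT' : (Finset.univ.filter (fun v : V' => v ∉ supp f' ∧ 0 ≤ f' v ∧ f' v < ((N' v / 2 : ℕ) : ℤ) ∧
          (f' v + 1, N' v) ::ₘ NMf N' f' (tau G' f' v) = Q)).card
      = (Finset.univ.filter (fun v : V' => v ∉ supp f' ∧ ((0:ℤ) < ((N' v / 2 : ℕ) : ℤ) ∧
          ((1:ℤ), N' v) ::ₘ NMf N' f' (tau G' f' v) = Q))).card := by
    congr 1
    apply Finset.filter_congr
    intro v _
    constructor
    · rintro ⟨hv, h1, h2, h3⟩
      have hv0 : f' v = 0 := by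
        by_contra h0
        exact hv (mem_supp.2 h0)
      rw [hv0] at h2
      rw [hv0, zero_add] at h3
      exact ⟨hv, h2, h3⟩
    · rintro ⟨hv, h2, h3⟩
      have hv0 : f' v = 0 := by
        by_contra h0
        exact hv (mem_supp.2 h0)
      rw [hv0, zero_add]
      exact ⟨hv, le_rfl, h2, h3⟩
  have outF' : (Finset.univ.filter (fun v : V' => v ∉ supp f' ∧ N' v ≠ 2 ∧ -((N' v / 2 : ℕ) : ℤ) < f' v ∧ f' v ≤ 0 ∧
          (f' v - 1, N' v) ::ₘ NMf N' f' (tau G' f' v) = Q)).card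
      = (Finset.univ.filter (fun v : V' => v ∉ supp f' ∧ (N' v ≠ 2 ∧ -((N' v / 2 : ℕ) : ℤ) < (0:ℤ) ∧
          ((-1:ℤ), N' v) ::ₘ NMf N' f' (tau G' f' v) = Q))).card := by
    congr 1
    apply Finset.filter_congr
    intro v _
    constructor
    · rintro ⟨hv, h1, h2, h3, h4⟩
      have hv0 : f' v = 0 := by
        by_contra h0
        exact hv (mem_supp.2 h0)
      rw [hv0] at h2
      rw [hv0, zero_sub] at h4
      exact ⟨hv, h1, h2, h4⟩
    · rintro ⟨hv, h1, h2, h4⟩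
      have hv0 : f' v = 0 := by
        by_contra h0
        exact hv (mem_supp.2 h0)
      rw [hv0, zero_sub]
      exact ⟨hv, h1, h2, le_rfl, h4⟩

  -- cross-graph equalities
  have crossT : (Finset.univ.filter (fun v : V => v ∉ supp f ∧ ((0:ℤ) < ((N v / 2 : ℕ) : ℤ) ∧
          ((1:ℤ), N v) ::ₘ NMf N f (tau G f v) = Q))).card
      = (Finset.univ.filter (fun v : V' => v ∉ supp f' ∧ ((0:ℤ) < ((N' v / 2 : ℕ) : ℤ) ∧
          ((1:ℤ), N' v) ::ₘ NMf N' f' (tau G' f' v) = Q))).card :=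
    out_cross hLR hLR' hEq hf hf' hP0
      (fun n S => (0:ℤ) < ((n / 2 : ℕ) : ℤ) ∧ ((1:ℤ), n) ::ₘ S = Q)
  have crossF : (Finset.univ.filter (fun v : V => v ∉ supp f ∧ (N v ≠ 2 ∧ -((N v / 2 : ℕ) : ℤ) < (0:ℤ) ∧
          ((-1:ℤ), N v) ::ₘ NMf N f (tau G f v) = Q))).card
      = (Finset.univ.filter (fun v : V' => v ∉ supp f' ∧ (N' v ≠ 2 ∧ -((N' v / 2 : ℕ) : ℤ) < (0:ℤ) ∧
          ((-1:ℤ), N' v) ::ₘ NMf N' f' (tau G' f' v) = Q))).card :=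
    out_cross hLR hLR' hEq hf hf' hP0
      (fun n S => n ≠ 2 ∧ -((n / 2 : ℕ) : ℤ) < (0:ℤ) ∧ ((-1:ℤ), n) ::ₘ S = Q)
  have crossInT : Multiset.countP (fun q : ℤ × ℕ => 0 ≤ q.1 ∧ q.1 < ((q.2 / 2 : ℕ) : ℤ) ∧
          (q.1 + 1, q.2) ::ₘ P.erase q = Q) (NMf N f (supp f))
      = Multiset.countP (fun q : ℤ × ℕ => 0 ≤ q.1 ∧ q.1 < ((q.2 / 2 : ℕ) : ℤ) ∧
          (q.1 + 1, q.2) ::ₘ P.erase q = Q) (NMf N' f' (supp f')) := by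
    rw [hP0]
  have crossInF : Multiset.countP (fun q : ℤ × ℕ => q.2 ≠ 2 ∧ -((q.2 / 2 : ℕ) : ℤ) < q.1 ∧ q.1 ≤ 0 ∧
          (q.1 - 1, q.2) ::ₘ P.erase q = Q) (NMf N f (supp f))
      = Multiset.countP (fun q : ℤ × ℕ => q.2 ≠ 2 ∧ -((q.2 / 2 : ℕ) : ℤ) < q.1 ∧ q.1 ≤ 0 ∧
          (q.1 - 1, q.2) ::ₘ P.erase q = Q) (NMf N' f' (supp f')) := by
    rw [hP0]
  omega
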